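/- With α = 2/3, ψ₀(x) = sin(2x/3) + (1/√3) cos(2x/3) and ψ₁(x) = −(1/(4√3)) cos(5x/3) − (1/4) sin(5x/3) − (5/4) sin(x/3) + (5/(4√3)) cos(x/3), the identity (−α+1)² ψ₁(x) + ψ₁''(x) = −(−α cos(x) ψ₀(x) − sin(x) ψ₀'(x)) holds for all real x, and ψ₁'(−π) = ψ₁'(π/2) = 0. -/

import Mathlib

/-!
Write `sinusoid k a b x = a cos (k x) + b sin (k x)`. For `ψ₀ = sinusoid α a b` the angle-addition
formulas collapse the right-hand side `α cos x ψ₀ + sin x ψ₀'` to the single mode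
`α · sinusoid (α + 1) a b`. Since `(1 - α)² - (1 + α)² = -4α`, the mode `-¼ · sinusoid (α + 1) a b`
is a particular solution for every `α`, and any `sinusoid (1 - α) c d` may be added as it solves the
homogeneous equation. For `α = 2/3` the function `ψ₁` is of this form, with `c, d` chosen so that
`ψ₁'` vanishes at `-π` and `π/2`; the boundary conditions are then a check on special values.
-/

open Real

noncomputable def vpsi010 : ℝ → ℝ := fun x => Real.sin (2*x/3) + (1/Real.sqrt 3) * Real.cos (2*x/3)
noncomputable def vpsi011 : ℝ → ℝ := fun x =>
  -(1/(4*Real.sqrt 3)) * Real.cos (5*x/3) - (1/4) * Real.sin (5*x/3)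
    - (5/4) * Real.sin (x/3) + (5/(4*Real.sqrt 3)) * Real.cos (x/3)

noncomputable def sinusoid (k a b : ℝ) : ℝ → ℝ := fun x => a * cos (k * x) + b * sin (k * x)

section Sinusoid

variable (k l a b c d : ℝ)

theorem hasDerivAt_sinusoid (x : ℝ) :
    HasDerivAt (sinusoid k a b) (sinusoid k (k * b) (-(k * a)) x) x := by
  have hcos := ((hasDerivAt_id x).const_mul k).cos.const_mul a
  have hsin := ((hasDerivAt_id x).const_mul k).sin.const_mul b
  exact (hcos.add hsin).congr_deriv (by simp only [sinusoid, id]; ring)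

theorem deriv_sinusoid : deriv (sinusoid k a b) = sinusoid k (k * b) (-(k * a)) :=
  funext fun x => (hasDerivAt_sinusoid k a b x).deriv

theorem deriv_sinusoid_add :
    deriv (sinusoid k a b + sinusoid l c d) =
      sinusoid k (k * b) (-(k * a)) + sinusoid l (l * d) (-(l * c)) :=
  funext fun x => ((hasDerivAt_sinusoid k a b x).add (hasDerivAt_sinusoid l c d x)).deriv

theorem cos_mul_sinusoid_add_sin_mul_deriv (x : ℝ) :
    k * cos x * sinusoid k a b x + sin x * deriv (sinusoid k a b) x =
      k * sinusoid (k + 1) a b x := by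
  simp only [deriv_sinusoid, sinusoid]
  rw [show (k + 1) * x = x + k * x by ring, cos_add, sin_add]
  ring

theorem shadow_equation_sinusoid (α : ℝ) (x : ℝ) :
    let ψ₁ := sinusoid (α + 1) (-a / 4) (-b / 4) + sinusoid (-α + 1) c d
    (-α + 1) ^ 2 * ψ₁ x + deriv (deriv ψ₁) x =
      -(-α * cos x * sinusoid α a b x - sin x * deriv (sinusoid α a b) x) := by
  intro ψ₁
  have hrhs := cos_mul_sinusoid_add_sin_mul_deriv α a b x
  rw [show -(-α * cos x * sinusoid α a b x - sin x * deriv (sinusoid α a b) x) =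
    α * cos x * sinusoid α a b x + sin x * deriv (sinusoid α a b) x by ring, hrhs]
  simp only [ψ₁, deriv_sinusoid_add, Pi.add_apply, sinusoid]
  ring

end Sinusoid

theorem vpsi010_eq_sinusoid : vpsi010 = sinusoid (2 / 3) (1 / √3) 1 := by
  funext x
  simp only [vpsi010, sinusoid]
  ring_nf

theorem vpsi011_eq_sinusoid :
    vpsi011 = sinusoid (2 / 3 + 1) (-(1 / √3) / 4) (-1 / 4) +
      sinusoid (-(2 / 3) + 1) (5 / (4 * √3)) (-5 / 4) := by
  funext x
  simp only [vpsi011, sinusoid, Pi.add_apply]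
  ring_nf

theorem deriv_vpsi011 :
    deriv vpsi011 = sinusoid (5 / 3) (-5 / 12) (5 / (12 * √3)) +
      sinusoid (1 / 3) (-5 / 12) (-5 / (12 * √3)) := by
  rw [vpsi011_eq_sinusoid, deriv_sinusoid_add]
  funext x
  simp only [sinusoid, Pi.add_apply]
  ring_nf

theorem deriv_vpsi011_neg_pi : deriv vpsi011 (-π) = 0 := by
  simp only [deriv_vpsi011, sinusoid, Pi.add_apply]
  rw [show 5 / 3 * -π = π / 3 - 2 * π by ring, show 1 / 3 * -π = -(π / 3) by ring,
    cos_sub_two_pi, sin_sub_two_pi, cos_neg, sin_neg, cos_pi_div_three, sin_pi_div_three]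
  field_simp
  ring

theorem deriv_vpsi011_pi_div_two : deriv vpsi011 (π / 2) = 0 := by
  simp only [deriv_vpsi011, sinusoid, Pi.add_apply]
  rw [show 5 / 3 * (π / 2) = π - π / 6 by ring, show 1 / 3 * (π / 2) = π / 6 by ring,
    cos_pi_sub, sin_pi_sub, cos_pi_div_six, sin_pi_div_six]
  field_simp
  ring

theorem vnotch_first_dual_shadow_j1 :
    (∀ x : ℝ, (-(2/3 : ℝ) + 1)^2 * vpsi011 x + deriv (deriv vpsi011) x =
      -(-(2/3 : ℝ) * Real.cos x * vpsi010 x - Real.sin x * deriv vpsi010 x)) ∧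
    deriv vpsi011 (-π) = 0 ∧ deriv vpsi011 (π/2) = 0 := by
  refine ⟨fun x => ?_, deriv_vpsi011_neg_pi, deriv_vpsi011_pi_div_two⟩
  rw [vpsi011_eq_sinusoid, vpsi010_eq_sinusoid]
  exact shadow_equation_sinusoid (1 / √3) 1 (5 / (4 * √3)) (-5 / 4) (2 / 3) x
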